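/- The prefix of length 60 of the Thue-Morse word contains exactly 40 distinct factors of length 13; consequently every prefix of the Thue-Morse word of length at least 60 has minimum string attractor size at least 4. -/

import Mathlib

def IsAttractor {α : Type*} (w : ℕ → α) (n : ℕ) (S : Finset ℕ) : Prop :=
  (∀ s ∈ S, s < n) ∧
  ∀ i j : ℕ, i ≤ j → j < n →
    ∃ i' j' : ℕ, i' ≤ j' ∧ j' < n ∧ j' - i' = j - i ∧
      (∀ t, t ≤ j - i → w (i' + t) = w (i + t)) ∧
      ∃ s ∈ S, i' ≤ s ∧ s ≤ j'

def tmStep : ℕ → List ℕ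
  | 0 => [0, 1]
  | _ => [1, 0]

def tmIter : ℕ → List ℕ
  | 0 => [0]
  | k + 1 => (tmIter k).flatMap tmStep

def tm (n : ℕ) : ℕ := (tmIter (n + 1)).getD n 0

def tmFactors (n i : ℕ) : Finset (List ℕ) :=
  (Finset.range (n + 1 - i)).image (fun j => List.ofFn (fun t : Fin i => tm (j + t)))

lemma tmIter_prefix_succ (k : ℕ) : tmIter k <+: tmIter (k + 1) := by
  induction k with
  | zero => exact ⟨[1], rfl⟩
  | succ k ih =>
    obtain ⟨t, ht⟩ := ih
    refine ⟨t.flatMap tmStep, ?_⟩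
    conv_rhs => rw [show tmIter (k+1+1) = (tmIter (k+1)).flatMap tmStep from rfl, ← ht,
      List.flatMap_append]
    rfl

lemma tmIter_prefix {j k : ℕ} (h : j ≤ k) : tmIter j <+: tmIter k := by
  induction k with
  | zero => simp [Nat.le_zero.mp h]
  | succ k ih =>
    rcases Nat.lt_or_ge j (k+1) with h' | h'
    · exact (ih (by omega)).trans (tmIter_prefix_succ k)
    · have : j = k + 1 := by omega
      simp [this]

lemma tmIter_length (k : ℕ) : (tmIter k).length = 2 ^ k := by
  induction k with
  | zero => rfl
  | succ k ih =>
    have hstep : ∀ x, (tmStep x).length = 2 := by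
      intro x; cases x <;> rfl
    show ((tmIter k).flatMap tmStep).length = 2 ^ (k+1)
    rw [List.length_flatMap]
    have h : List.map (fun a => (tmStep a).length) (tmIter k) = List.map (fun _ => 2) (tmIter k) :=
      List.map_congr_left (fun x _ => hstep x)
    rw [h, List.map_const', List.sum_replicate, ih, smul_eq_mul]
    ring

lemma getD_of_prefix {l₁ l₂ : List ℕ} (h : l₁ <+: l₂) {n : ℕ} (hn : n < l₁.length) :
    l₂.getD n 0 = l₁.getD n 0 := by
  obtain ⟨t, rfl⟩ := h
  simp [List.getD, List.getElem?_append_left hn]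

lemma tm_small {n : ℕ} (hn : n < 64) : tm n = (tmIter 6).getD n 0 := by
  unfold tm
  rcases Nat.lt_or_ge (n+1) 6 with h | h
  · have h1 : tmIter (n+1) <+: tmIter 6 := tmIter_prefix (by omega)
    have h2 : n < (tmIter (n+1)).length := by
      rw [tmIter_length]; exact lt_of_lt_of_le (Nat.lt_two_pow_self (n := n)) (Nat.pow_le_pow_right (by norm_num) (by omega))
    rw [getD_of_prefix h1 h2]
  · have h1 : tmIter 6 <+: tmIter (n+1) := tmIter_prefix (by omega)
    have h2 : n < (tmIter 6).length := by rw [tmIter_length]; omega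
    rw [getD_of_prefix h1 h2]

lemma tmFactors_eq : tmFactors 60 13 =
    (Finset.range 48).image (fun j => List.ofFn (fun t : Fin 13 => (tmIter 6).getD (j + t) 0)) := by
  unfold tmFactors
  apply Finset.image_congr
  intro j hj
  simp only [Finset.coe_range, Set.mem_Iio] at hj
  exact congrArg List.ofFn (funext fun t => tm_small (by omega))

lemma tmFactors_card : (tmFactors 60 13).card = 40 := by
  rw [tmFactors_eq]; decide

/-- The length-60 prefix of Thue-Morse has exactly 40 distinct factors of length 13;
consequently every prefix of length at least 60 has minimum string attractor size
at least 4. -/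
theorem tm_forty_factors :
    (tmFactors 60 13).card = 40 ∧
    ∀ n : ℕ, 60 ≤ n → ∀ S : Finset ℕ, IsAttractor tm n S → 4 ≤ S.card := by
  refine ⟨tmFactors_card, ?_⟩
  intro n hn S hS
  have hsub : tmFactors 60 13 ⊆ (S ×ˢ Finset.range 13).image
      (fun p : ℕ × ℕ => List.ofFn fun t : Fin 13 => tm (p.1 - p.2 + t)) := by
    intro w hw
    simp only [tmFactors, Finset.mem_image, Finset.mem_range] at hw
    obtain ⟨j, hj, rfl⟩ := hw
    obtain ⟨i', j', h1, h2, h3, h4, s, hs, h5, h6⟩ := hS.2 j (j + 12) (by omega) (by omega)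
    refine Finset.mem_image.mpr ⟨(s, s - i'),
      Finset.mem_product.mpr ⟨hs, Finset.mem_range.mpr (by omega)⟩, ?_⟩
    have hi : s - (s - i') = i' := by omega
    simp only [hi]
    congr 1
    funext t
    exact h4 t (by omega)
  have h1 := Finset.card_le_card hsub
  rw [tmFactors_card] at h1
  have h2 := Finset.card_image_le (s := S ×ˢ Finset.range 13)
    (f := fun p : ℕ × ℕ => List.ofFn fun t : Fin 13 => tm (p.1 - p.2 + t))
  rw [Finset.card_product, Finset.card_range] at h2
  omega
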